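/- (Dynamic indexing extracts the indexed value) Let Z ∈ ℝ^n with m_j ≤ Z_j ≤ M_j for all j, let t ∈ {1,…,n}, and let Δ ∈ {0,1}^n, Ẑ ∈ ℝ^n satisfy: Σ_j Δ_j = 1, Σ_j j·Δ_j = t, and for every j: Ẑ_j ≥ m_j Δ_j, Ẑ_j ≤ M_j Δ_j, Ẑ_j ≤ Z_j − m_j(1 − Δ_j), Ẑ_j ≥ Z_j − M_j(1 − Δ_j). Then Σ_j Ẑ_j = Z_t. -/

import Mathlib

/-!
The binary vector Δ sums to one, so it is the indicator of a single index, and the weighted sum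
∑ j Δ_j = t identifies that index as t. Entrywise, the four big-M constraints force Ẑ_j = Z_j Δ_j:
when Δ_j = 0 the first pair pins Ẑ_j to 0, and when Δ_j = 1 the second pair pins it to Z_j.
Hence ∑ Ẑ_j = ∑ Z_j Δ_j = Z_t.
-/

open Finset

theorem Finset.exists_eq_ite_of_sum_eq_one {ι R : Type*} [AddCommMonoidWithOne R] [CharZero R]
    [DecidableEq ι] {s : Finset ι} {δ : ι → R} (hbin : ∀ j ∈ s, δ j = 0 ∨ δ j = 1)
    (hsum : ∑ j ∈ s, δ j = 1) : ∃ i ∈ s, ∀ j ∈ s, δ j = if j = i then 1 else 0 := by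
  classical
  have hboole : ∑ j ∈ s, δ j = #(s.filter fun j => δ j = 1) := by
    rw [← sum_boole]
    refine sum_congr rfl fun j hj => ?_
    rcases hbin j hj with h | h <;> simp [h]
  obtain ⟨i, hi⟩ := card_eq_one.mp (by exact_mod_cast hboole.symm.trans hsum)
  have hmem : ∀ j ∈ s, δ j = 1 ↔ j = i := fun j hj => by
    simpa [hj] using congrArg (j ∈ ·) hi
  refine ⟨i, (mem_filter.mp (hi ▸ mem_singleton_self i)).1, fun j hj => ?_⟩
  split_ifs with hji
  · exact (hmem j hj).mpr hji
  · exact (hbin j hj).resolve_right (mt (hmem j hj).mp hji)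

theorem Finset.sum_mul_eq_of_eq_ite {ι R : Type*} [NonAssocSemiring R] [DecidableEq ι]
    {s : Finset ι} {δ : ι → R} {i : ι} (hi : i ∈ s)
    (hδ : ∀ j ∈ s, δ j = if j = i then 1 else 0) (f : ι → R) :
    ∑ j ∈ s, f j * δ j = f i := by
  rw [sum_congr rfl fun j hj => by rw [hδ j hj]]
  simp [hi]

theorem eq_mul_of_bigM_bounds {R : Type*} [Ring R] [PartialOrder R] {δ z x m M : R}
    (hδ : δ = 0 ∨ δ = 1) (h1 : z ≥ m * δ) (h2 : z ≤ M * δ) (h3 : z ≤ x - m * (1 - δ))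
    (h4 : z ≥ x - M * (1 - δ)) : z = x * δ := by
  rcases hδ with rfl | rfl
  · simp only [mul_zero] at h1 h2 ⊢
    exact le_antisymm h2 h1
  · simp only [sub_self, mul_zero, sub_zero, mul_one] at h3 h4 ⊢
    exact le_antisymm h3 h4

theorem dynamic_indexing_extracts_general
    (n : ℕ) (Z Zhat Δ m M : ℕ → ℝ)
    (t : ℕ)
    (hbin : ∀ j, Δ j = 0 ∨ Δ j = 1)
    (hsum : ∑ j ∈ Finset.Icc 1 n, Δ j = 1)
    (hidx : ∑ j ∈ Finset.Icc 1 n, (j : ℝ) * Δ j = (t : ℝ))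
    (h1 : ∀ j ∈ Finset.Icc 1 n, Zhat j ≥ m j * Δ j)
    (h2 : ∀ j ∈ Finset.Icc 1 n, Zhat j ≤ M j * Δ j)
    (h3 : ∀ j ∈ Finset.Icc 1 n, Zhat j ≤ Z j - m j * (1 - Δ j))
    (h4 : ∀ j ∈ Finset.Icc 1 n, Zhat j ≥ Z j - M j * (1 - Δ j)) :
    ∑ j ∈ Finset.Icc 1 n, Zhat j = Z t := by
  obtain ⟨i, hi, hΔ⟩ := exists_eq_ite_of_sum_eq_one (fun j _ => hbin j) hsum
  have hit : i = t := by
    exact_mod_cast (sum_mul_eq_of_eq_ite hi hΔ (fun j => (j : ℝ))).symm.trans hidx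
  subst hit
  calc ∑ j ∈ Icc 1 n, Zhat j = ∑ j ∈ Icc 1 n, Z j * Δ j :=
        sum_congr rfl fun j hj =>
          eq_mul_of_bigM_bounds (hbin j) (h1 j hj) (h2 j hj) (h3 j hj) (h4 j hj)
    _ = Z i := sum_mul_eq_of_eq_ite hi hΔ Z

theorem dynamic_indexing_extracts
    (n : ℕ) (Z Zhat Δ m M : ℕ → ℝ)
    (hbnd : ∀ j ∈ Finset.Icc 1 n, m j ≤ Z j ∧ Z j ≤ M j)
    (t : ℕ) (ht : 1 ≤ t ∧ t ≤ n)
    (hbin : ∀ j, Δ j = 0 ∨ Δ j = 1)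
    (hsum : ∑ j ∈ Finset.Icc 1 n, Δ j = 1)
    (hidx : ∑ j ∈ Finset.Icc 1 n, (j : ℝ) * Δ j = (t : ℝ))
    (h1 : ∀ j ∈ Finset.Icc 1 n, Zhat j ≥ m j * Δ j)
    (h2 : ∀ j ∈ Finset.Icc 1 n, Zhat j ≤ M j * Δ j)
    (h3 : ∀ j ∈ Finset.Icc 1 n, Zhat j ≤ Z j - m j * (1 - Δ j))
    (h4 : ∀ j ∈ Finset.Icc 1 n, Zhat j ≥ Z j - M j * (1 - Δ j)) :
    ∑ j ∈ Finset.Icc 1 n, Zhat j = Z t :=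
  dynamic_indexing_extracts_general n Z Zhat Δ m M t hbin hsum hidx h1 h2 h3 h4
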